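/- There exists a seat over the tropical semiring (ℕ ∪ {∞}, min, +) and a resource a and sets P, Q such that Int_a(P) ∩ Int_a(Q) ⊄ Int_a(P ∩ Q), i.e., the weighted interior Int_a is not closed under finite intersections. -/
import Mathlib


open Set Topology

/-- A semiring-annotated topological space (seat). -/
structure Seat (X : Type*) (K : Type*) [TopologicalSpace X] [Semiring K] where
  A : Set X → X → Set K
  strengthen : ∀ ⦃U : Set X⦄, IsOpen U → ∀ (x : X) (a b : K),
      a ∈ A U x → a * b ∈ A U x ∧ b * a ∈ A U x
  weaken : ∀ ⦃U V : Set X⦄, IsOpen U → IsOpen V → U ⊆ V → ∀ x : X, A U x ⊆ A V x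
  choice : ∀ ⦃U : Set X⦄, IsOpen U → ∀ (x : X) (a b : K),
      a ∈ A U x → b ∈ A U x → a + b ∈ A U x
  combine : ∀ ⦃U V : Set X⦄, IsOpen U → IsOpen V → ∀ (x : X) (a b : K),
      a ∈ A U x → b ∈ A V x → a * b ∈ A (U ∩ V) x
  zero_univ : ∀ x : X, (0 : K) ∈ A Set.univ x

variable {X K : Type*} [TopologicalSpace X] [Semiring K]

/-- `For_a(P)`: states where evidence supporting `P` is accessible using resource `a`. -/
def Seat.For (S : Seat X K) (a : K) (P : Set X) : Set X :=
  {x | ∃ U : Set X, IsOpen U ∧ U ⊆ P ∧ a ∈ S.A U x}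

/-- Weighted interior `Int_a(P)`. -/
def Seat.Inta (S : Seat X K) (a : K) (P : Set X) : Set X :=
  {x | ∃ U : Set X, IsOpen U ∧ x ∈ U ∧ U ⊆ P ∧ a ∈ S.A U x}

inductive Y3 : Type where
  | x | y | z
deriving DecidableEq

instance tY : TopologicalSpace Y3 where
  IsOpen U := U = ∅ ∨ Y3.x ∈ U
  isOpen_univ := Or.inr trivial
  isOpen_inter U V hU hV := by
    rcases hU with h | h
    · left; simp [h]
    · rcases hV with h' | h'
      · left; simp [h']
      · right; exact ⟨h, h'⟩
  isOpen_sUnion s hs := by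
    by_cases h : ∀ U ∈ s, U = ∅
    · left; simpa using h
    · push_neg at h
      obtain ⟨U, hUs, hU⟩ := h
      right
      exact ⟨U, hUs, (hs U hUs).resolve_left (Set.nonempty_iff_ne_empty.mp hU)⟩

open Classical in
noncomputable def thr (U : Set Y3) (p : Y3) : ℕ∞ :=
  if p = Y3.x ∧ U ≠ {Y3.x} then 42 else 43

lemma thr_ge (U : Set Y3) (p : Y3) : (42 : ℕ∞) ≤ thr U p := by
  unfold thr; split <;> norm_num

lemma thr_le (U : Set Y3) (p : Y3) : thr U p ≤ 43 := by
  unfold thr; split <;> norm_num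

def SA (U : Set Y3) (p : Y3) : Set (Tropical ℕ∞) :=
  {k | U.Nonempty ∧ thr U p ≤ Tropical.untrop k}

lemma mem_SA {U : Set Y3} {p : Y3} {k : Tropical ℕ∞} :
    k ∈ SA U p ↔ U.Nonempty ∧ thr U p ≤ Tropical.untrop k := Iff.rfl

noncomputable def SS : Seat Y3 (Tropical ℕ∞) where
  A := SA
  strengthen := by
    intro U hU p a b ha
    rw [mem_SA] at ha
    obtain ⟨hne, ha⟩ := ha
    constructor <;>
      · rw [mem_SA, Tropical.untrop_mul]
        refine ⟨hne, le_trans ha ?_⟩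
        first
          | exact le_self_add
          | exact le_add_self
  weaken := by
    intro U V hU hV hUV p k hk
    rw [mem_SA] at hk ⊢
    obtain ⟨hne, hk⟩ := hk
    refine ⟨hne.mono hUV, le_trans ?_ hk⟩
    unfold thr
    by_cases hp : p = Y3.x
    · by_cases hV1 : V = {Y3.x}
      · have hU1 : U = {Y3.x} := by
          apply subset_antisymm (hV1 ▸ hUV)
          intro w hw
          simp at hw
          subst hw
          obtain ⟨u, hu⟩ := hne
          have hu' := hUV hu
          rw [hV1] at hu'
          simp at hu'
          subst hu'
          exact hu
        simp [hp, hV1, hU1]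
      · simp only [hp, hV1, ne_eq, not_false_eq_true, and_self, if_true, true_and]
        split <;> norm_num
    · simp [hp]
  choice := by
    intro U hU p a b ha hb
    rw [mem_SA] at ha hb ⊢
    exact ⟨ha.1, by rw [Tropical.untrop_add]; exact le_min ha.2 hb.2⟩
  combine := by
    intro U V hU hV p a b ha hb
    rw [mem_SA] at ha hb ⊢
    obtain ⟨hUne, ha⟩ := ha
    obtain ⟨hVne, hb⟩ := hb
    have hU0 : Y3.x ∈ U := hU.resolve_left (by rintro rfl; simp at hUne)
    have hV0 : Y3.x ∈ V := hV.resolve_left (by rintro rfl; simp at hVne)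
    refine ⟨⟨Y3.x, hU0, hV0⟩, ?_⟩
    rw [Tropical.untrop_mul]
    calc thr (U ∩ V) p ≤ 43 := thr_le _ _
      _ ≤ 42 + 42 := by norm_num
      _ ≤ _ := add_le_add (le_trans (thr_ge _ _) ha) (le_trans (thr_ge _ _) hb)
  zero_univ := by
    intro p
    rw [mem_SA]
    refine ⟨⟨Y3.x, trivial⟩, ?_⟩
    rw [show (0 : Tropical ℕ∞) = Tropical.trop ⊤ from rfl, Tropical.untrop_trop]
    exact le_top


/-- There is a seat over the tropical semiring `(ℕ∞, min, +)`, a resource `a` and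
sets `P, Q` such that `Int_a(P) ∩ Int_a(Q) ⊄ Int_a(P ∩ Q)`. -/
theorem Inta_not_inter_closed :
    ∃ (Y : Type) (t : TopologicalSpace Y)
      (S : @Seat Y (Tropical ℕ∞) t _) (a : Tropical ℕ∞) (P Q : Set Y),
      ¬ (@Seat.Inta Y (Tropical ℕ∞) t _ S a P ∩ @Seat.Inta Y (Tropical ℕ∞) t _ S a Q
          ⊆ @Seat.Inta Y (Tropical ℕ∞) t _ S a (P ∩ Q)) := by
  refine ⟨Y3, tY, SS, Tropical.trop 42, {Y3.x, Y3.y}, {Y3.x, Y3.z}, ?_⟩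
  intro h
  have key : ∀ W : Set Y3, Y3.x ∈ W → W ≠ {Y3.x} →
      Tropical.trop (42 : ℕ∞) ∈ SA W Y3.x := by
    intro W hW hW'
    rw [mem_SA, Tropical.untrop_trop]
    exact ⟨⟨_, hW⟩, by rw [thr, if_pos ⟨rfl, hW'⟩]⟩
  have h0P : Y3.x ∈ @Seat.Inta Y3 (Tropical ℕ∞) tY _ SS (Tropical.trop 42) {Y3.x, Y3.y} := by
    refine ⟨{Y3.x, Y3.y}, Or.inr (by simp), by simp, le_refl _, key _ (by simp) ?_⟩
    intro heq
    have : Y3.y ∈ ({Y3.x} : Set Y3) := heq ▸ (by simp)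
    simp at this
  have h0Q : Y3.x ∈ @Seat.Inta Y3 (Tropical ℕ∞) tY _ SS (Tropical.trop 42) {Y3.x, Y3.z} := by
    refine ⟨{Y3.x, Y3.z}, Or.inr (by simp), by simp, le_refl _, key _ (by simp) ?_⟩
    intro heq
    have : Y3.z ∈ ({Y3.x} : Set Y3) := heq ▸ (by simp)
    simp at this
  obtain ⟨U, hU, h0U, hsub, ha⟩ := h ⟨h0P, h0Q⟩
  have ha' : Tropical.trop (42 : ℕ∞) ∈ SA U Y3.x := ha
  rw [mem_SA, Tropical.untrop_trop] at ha'
  have hU0 : U = {Y3.x} := by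
    apply subset_antisymm
    · intro w hw
      have hw' := hsub hw
      simp at hw' ⊢
      rcases hw'.1 with h1 | h1 <;> rcases hw'.2 with h2 | h2 <;> simp_all
    · intro w hw; simp at hw; subst hw; exact h0U
  rw [thr, if_neg (by simp [hU0])] at ha'
  exact absurd ha'.2 (by norm_num)
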